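/- arXiv:2303.00432 — 2 statements merged into one kernel-verified Lean document; each statement's English description precedes it below -/
import Mathlib

section
/- The relation on mixed-dimensional real vectors defined by x ↔ y iff there exist all-ones vectors 1_α and 1_β with x ⊗ 1_α = y ⊗ 1_β (Kronecker product) is an equivalence relation. -/
open Matrix

noncomputable section

/-- All-ones vector in `ℝ^k`. -/
def ones (k : ℕ) : Fin k → ℝ := fun _ => 1

/-- Kronecker product of two vectors (column vectors). -/
def vkron {m k : ℕ} (x : Fin m → ℝ) (y : Fin k → ℝ) : Fin (m * k) → ℝ :=
  fun i => x (finProdFinEquiv.symm i).1 * y (finProdFinEquiv.symm i).2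

/-- `J_k`: the `k × k` matrix all of whose entries are `1/k`. -/
def Jmat (k : ℕ) : Matrix (Fin k) (Fin k) ℝ := Matrix.of fun _ _ => (k : ℝ)⁻¹

/-- Kronecker product of matrices. -/
def mkron {m n p q : ℕ} (A : Matrix (Fin m) (Fin n) ℝ) (B : Matrix (Fin p) (Fin q) ℝ) :
    Matrix (Fin (m * p)) (Fin (n * q)) ℝ :=
  Matrix.of fun i j =>
    A (finProdFinEquiv.symm i).1 (finProdFinEquiv.symm j).1 *
    B (finProdFinEquiv.symm i).2 (finProdFinEquiv.symm j).2

/-- Mixed-dimensional vectors. -/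
def MVec := Σ n : ℕ, Fin n → ℝ

/-- Vector equivalence: `x ↔ y` iff `x ⊗ 1_α = y ⊗ 1_β` for some `α, β ≥ 1`. -/
def vequiv (x y : MVec) : Prop :=
  ∃ α β : ℕ, 0 < α ∧ 0 < β ∧ ∃ h : x.1 * α = y.1 * β,
    ∀ i, vkron x.2 (ones α) i = vkron y.2 (ones β) (Fin.cast h i)


/-
Inflations compose multiplicatively, `(x ⊗ 1_α) ⊗ 1_γ = x ⊗ 1_(αγ)`, because both sides
repeat each entry `x_j` over the same block of `αγ` consecutive positions. So `x ↔ y` says that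
`x` and `y` have a common inflation, and given `x ⊗ 1_α = y ⊗ 1_β` and `y ⊗ 1_γ = z ⊗ 1_δ`,
inflating the first equation by `γ` and the second by `β` makes both pass through `y ⊗ 1_(βγ)`,
whence `x ⊗ 1_(αγ) = z ⊗ 1_(δβ)`.
-/

lemma vkron_ones_apply {m α : ℕ} (f : Fin m → ℝ) (i : Fin (m * α)) :
    vkron f (ones α) i = f i.divNat := by
  simp [vkron, ones]

lemma vkron_ones_vkron_ones {m α γ : ℕ} (f : Fin m → ℝ) (i : Fin (m * α * γ)) :
    vkron (vkron f (ones α)) (ones γ) i =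
      vkron f (ones (α * γ)) (Fin.cast (mul_assoc m α γ) i) := by
  simp only [vkron_ones_apply]
  exact congr_arg f (Fin.ext (by simp [Nat.div_div_eq_div_mul, Nat.mul_comm γ α]))

namespace MVec

lemma mk_eq_mk_iff {m n : ℕ} {f : Fin m → ℝ} {g : Fin n → ℝ} :
    (⟨m, f⟩ : MVec) = ⟨n, g⟩ ↔ ∃ h : m = n, ∀ i, f i = g (Fin.cast h i) := by
  constructor
  · rintro ⟨⟩
    exact ⟨rfl, fun _ => rfl⟩
  · rintro ⟨rfl, hfg⟩
    exact congrArg _ (funext hfg)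

def inflate (α : ℕ) (x : MVec) : MVec := ⟨x.1 * α, vkron x.2 (ones α)⟩

lemma vequiv_iff_inflate_eq {x y : MVec} :
    vequiv x y ↔ ∃ α β : ℕ, 0 < α ∧ 0 < β ∧ x.inflate α = y.inflate β :=
  exists₂_congr fun _ _ => and_congr_right' (and_congr_right' mk_eq_mk_iff.symm)

lemma inflate_inflate (x : MVec) (α γ : ℕ) : (x.inflate α).inflate γ = x.inflate (α * γ) :=
  mk_eq_mk_iff.2 ⟨mul_assoc _ _ _, vkron_ones_vkron_ones x.2⟩

lemma inflate_comm (x : MVec) (α γ : ℕ) : (x.inflate α).inflate γ = (x.inflate γ).inflate α := by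
  rw [inflate_inflate, inflate_inflate, Nat.mul_comm]

end MVec

open MVec

/-- the relation `↔` on mixed-dimensional real vectors is an
equivalence relation. -/
theorem vequiv_equivalence : Equivalence vequiv := by
  constructor
  · intro x
    exact vequiv_iff_inflate_eq.2 ⟨1, 1, one_pos, one_pos, rfl⟩
  · intro x y hxy
    obtain ⟨α, β, hα, hβ, h⟩ := vequiv_iff_inflate_eq.1 hxy
    exact vequiv_iff_inflate_eq.2 ⟨β, α, hβ, hα, h.symm⟩
  · intro x y z hxy hyz
    obtain ⟨α, β, hα, hβ, hxy⟩ := vequiv_iff_inflate_eq.1 hxy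
    obtain ⟨γ, δ, hγ, hδ, hyz⟩ := vequiv_iff_inflate_eq.1 hyz
    refine vequiv_iff_inflate_eq.2 ⟨α * γ, δ * β, Nat.mul_pos hα hγ, Nat.mul_pos hδ hβ, ?_⟩
    calc x.inflate (α * γ) = (y.inflate β).inflate γ := by rw [← hxy, inflate_inflate]
      _ = (y.inflate γ).inflate β := inflate_comm y β γ
      _ = z.inflate (δ * β) := by rw [hyz, inflate_inflate]
end
end

section
/- The second semi-tensor product A ∘ B := (A ⊗ J_{t/n})(B ⊗ J_{t/p}), where A ∈ ℝ^{m×n}, B ∈ ℝ^{p×q} and t = lcm(n,p), is associative: (A ∘ B) ∘ C = A ∘ (B ∘ C) for all real matrices A, B, C. -/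
open Matrix

noncomputable section

/-- The second semi-tensor product `A ∘ B := (A ⊗ J_{t/n})(B ⊗ J_{t/p})`, `t = lcm(n, p)`. -/
def sstp {m n p q : ℕ} (A : Matrix (Fin m) (Fin n) ℝ) (B : Matrix (Fin p) (Fin q) ℝ) :
    Matrix (Fin (m * (Nat.lcm n p / n))) (Fin (q * (Nat.lcm n p / p))) ℝ :=
  if h : n * (Nat.lcm n p / n) = p * (Nat.lcm n p / p) then
    mkron A (Jmat (Nat.lcm n p / n)) *
      (mkron B (Jmat (Nat.lcm n p / p))).submatrix (Fin.cast h) id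
  else 0

/-
Extended by zero to `ℕ × ℕ`, the matrix `A ⊗ J_k` is the kernel `(i, j) ↦ A (i / k) (j / k) / k`, and
`A ∘ B` is the product, over `lcm n p` inner indices, of two such rescaled kernels. Rescaling composes
multiplicatively and commutes with kernel products, so `(A ∘ B) ∘ C` and `A ∘ (B ∘ C)` are both triple
products `(A ⊗ J_α)(B ⊗ J_β)(C ⊗ J_γ)`. The two triples of scale factors agree because of the identity
`p · lcm(q · lcm(n,p)/p, u) = q · lcm(n, p · lcm(q,u)/q)`, both sides being `lcm(qn, pq, pu)`.
-/

open Finset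

/-- Matrices are compared through their extension by zero to `ℕ × ℕ`, which avoids casts between
`Fin` types of propositionally equal sizes. -/
def Matrix.toKernel {m n : ℕ} (M : Matrix (Fin m) (Fin n) ℝ) (i j : ℕ) : ℝ :=
  if h : i < m ∧ j < n then M ⟨i, h.1⟩ ⟨j, h.2⟩ else 0

def kernelMul (N : ℕ) (f g : ℕ → ℕ → ℝ) (i j : ℕ) : ℝ :=
  ∑ r ∈ range N, f i r * g r j

def inflate (k : ℕ) (f : ℕ → ℕ → ℝ) (i j : ℕ) : ℝ :=
  f (i / k) (j / k) / k

lemma kernelMul_assoc (M N : ℕ) (f g h : ℕ → ℕ → ℝ) :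
    kernelMul M (kernelMul N f g) h = kernelMul N f (kernelMul M g h) := by
  funext i j
  simp only [kernelMul, sum_mul, mul_sum, mul_assoc]
  exact sum_comm

lemma inflate_inflate (k l : ℕ) (f : ℕ → ℕ → ℝ) : inflate l (inflate k f) = inflate (k * l) f := by
  funext i j
  rw [inflate, inflate, Nat.div_div_eq_div_mul, Nat.div_div_eq_div_mul, Nat.mul_comm l k, div_div,
    inflate, Nat.cast_mul]

lemma Finset.sum_range_mul_comp_div {M : Type*} [AddCommMonoid M] (N k : ℕ) (g : ℕ → M) :
    ∑ r ∈ range (N * k), g (r / k) = k • ∑ s ∈ range N, g s := by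
  rcases k.eq_zero_or_pos with rfl | hk
  · simp
  induction N with
  | zero => simp
  | succ N ih =>
    have hblock : ∀ x ∈ range k, g ((N * k + x) / k) = g N := fun x hx => by
      rw [add_comm, Nat.add_mul_div_right _ _ hk, Nat.div_eq_of_lt (mem_range.1 hx), zero_add]
    rw [Nat.succ_mul, sum_range_add, ih, sum_congr rfl hblock, sum_range_succ, sum_const,
      card_range, smul_add]

lemma inflate_kernelMul (k N : ℕ) (f g : ℕ → ℕ → ℝ) :
    inflate k (kernelMul N f g) = kernelMul (N * k) (inflate k f) (inflate k g) := by
  funext i j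
  rcases eq_or_ne (k : ℝ) 0 with hk | hk
  · simp [inflate, kernelMul, hk]
  simp only [inflate, kernelMul]
  rw [sum_range_mul_comp_div N k fun s => f (i / k) s / k * (g s (j / k) / k), nsmul_eq_mul,
    sum_div, mul_sum]
  refine sum_congr rfl fun s _ => ?_
  field_simp

lemma Matrix.toKernel_mul {m n q : ℕ} (M : Matrix (Fin m) (Fin n) ℝ) (N : Matrix (Fin n) (Fin q) ℝ) :
    (M * N).toKernel = kernelMul n M.toKernel N.toKernel := by
  funext i j
  simp only [toKernel, kernelMul, mul_apply]
  by_cases hij : i < m ∧ j < q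
  · rw [dif_pos hij, sum_range]
    refine Fintype.sum_congr _ _ fun r => ?_
    rw [dif_pos ⟨hij.1, r.isLt⟩, dif_pos ⟨r.isLt, hij.2⟩]
  · rw [dif_neg hij]
    refine (sum_eq_zero fun r _ => ?_).symm
    rcases not_and_or.1 hij with hi | hj
    · simp [hi]
    · simp [hj]

lemma Matrix.toKernel_submatrix_cast {m m' n : ℕ} (h : m = m') (M : Matrix (Fin m') (Fin n) ℝ) :
    (M.submatrix (Fin.cast h) id).toKernel = M.toKernel := by
  subst h
  rfl

lemma Matrix.toKernel_mkron_Jmat {m n : ℕ} (A : Matrix (Fin m) (Fin n) ℝ) (k : ℕ) :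
    (mkron A (Jmat k)).toKernel = inflate k A.toKernel := by
  funext i j
  rcases k.eq_zero_or_pos with rfl | hk
  · simp [toKernel, inflate]
  have hdiv (i N : ℕ) : i / k < N ↔ i < N * k := Nat.div_lt_iff_lt_mul hk
  simp only [toKernel, inflate, hdiv]
  split_ifs
  · simp [mkron, Jmat, div_eq_mul_inv, Fin.divNat]
  · simp

lemma Matrix.toKernel_sstp {m n p q : ℕ} (A : Matrix (Fin m) (Fin n) ℝ) (B : Matrix (Fin p) (Fin q) ℝ) :
    (sstp A B).toKernel = kernelMul (n * (Nat.lcm n p / n))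
      (inflate (Nat.lcm n p / n) A.toKernel) (inflate (Nat.lcm n p / p) B.toKernel) := by
  have hn : n * (Nat.lcm n p / n) = Nat.lcm n p := Nat.mul_div_cancel' (Nat.dvd_lcm_left n p)
  have hp : p * (Nat.lcm n p / p) = Nat.lcm n p := Nat.mul_div_cancel' (Nat.dvd_lcm_right n p)
  rw [sstp, dif_pos (hn.trans hp.symm), toKernel_mul, toKernel_submatrix_cast, toKernel_mkron_Jmat,
    toKernel_mkron_Jmat]

lemma Matrix.heq_of_toKernel_eq {m n m' n' : ℕ} {M : Matrix (Fin m) (Fin n) ℝ}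
    {M' : Matrix (Fin m') (Fin n') ℝ} (hm : m = m') (hn : n = n') (h : M.toKernel = M'.toKernel) :
    HEq M M' := by
  subst hm hn
  refine heq_of_eq (Matrix.ext fun i j => ?_)
  simpa [toKernel] using congr_fun₂ h i j

theorem Nat.mul_lcm_mul_lcm_div_comm (n p q u : ℕ) :
    p * Nat.lcm (q * (Nat.lcm n p / p)) u = q * Nat.lcm n (p * (Nat.lcm q u / q)) := by
  have hp : p * (Nat.lcm n p / p) = Nat.lcm n p := Nat.mul_div_cancel' (Nat.dvd_lcm_right n p)
  have hq : q * (Nat.lcm q u / q) = Nat.lcm q u := Nat.mul_div_cancel' (Nat.dvd_lcm_left q u)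
  calc p * Nat.lcm (q * (Nat.lcm n p / p)) u = Nat.lcm (q * Nat.lcm n p) (p * u) := by
        rw [← Nat.lcm_mul_left, Nat.mul_left_comm p q, hp]
    _ = Nat.lcm (q * n) (Nat.lcm (p * q) (p * u)) := by
        rw [← Nat.lcm_mul_left, Nat.lcm_assoc, Nat.mul_comm q p]
    _ = q * Nat.lcm n (p * (Nat.lcm q u / q)) := by
        rw [← Nat.lcm_mul_left q, Nat.mul_left_comm q p, hq, Nat.lcm_mul_left]

/-- `(A ∘ B) ∘ C = (A ⊗ J_{a₁a₂})(B ⊗ J_{b₁a₂})(C ⊗ J_{b₂})` and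
`A ∘ (B ∘ C) = (A ⊗ J_a)(B ⊗ J_{cd})(C ⊗ J_{ed})`. -/
lemma sstp_assoc_factors {n p q u : ℕ} (hn : 0 < n) (hp : 0 < p) (hq : 0 < q) (hu : 0 < u) :
    let a₁ := Nat.lcm n p / n
    let b₁ := Nat.lcm n p / p
    let a₂ := Nat.lcm (q * b₁) u / (q * b₁)
    let b₂ := Nat.lcm (q * b₁) u / u
    let c := Nat.lcm q u / q
    let e := Nat.lcm q u / u
    let a := Nat.lcm n (p * c) / n
    let d := Nat.lcm n (p * c) / (p * c)
    a₁ * a₂ = a ∧ b₁ * a₂ = c * d ∧ b₂ = e * d := by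
  intro a₁ b₁ a₂ b₂ c e a d
  have hc_pos : 0 < c := Nat.div_pos (Nat.le_of_dvd (Nat.lcm_pos hq hu) (Nat.dvd_lcm_left q u)) hq
  have ha₁ : n * a₁ = Nat.lcm n p := Nat.mul_div_cancel' (Nat.dvd_lcm_left n p)
  have hb₁ : p * b₁ = Nat.lcm n p := Nat.mul_div_cancel' (Nat.dvd_lcm_right n p)
  have ha₂ : q * b₁ * a₂ = Nat.lcm (q * b₁) u := Nat.mul_div_cancel' (Nat.dvd_lcm_left _ u)
  have hb₂ : u * b₂ = Nat.lcm (q * b₁) u := Nat.mul_div_cancel' (Nat.dvd_lcm_right _ u)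
  have hc : q * c = Nat.lcm q u := Nat.mul_div_cancel' (Nat.dvd_lcm_left q u)
  have he : u * e = Nat.lcm q u := Nat.mul_div_cancel' (Nat.dvd_lcm_right q u)
  have ha : n * a = Nat.lcm n (p * c) := Nat.mul_div_cancel' (Nat.dvd_lcm_left n _)
  have hd : p * c * d = Nat.lcm n (p * c) := Nat.mul_div_cancel' (Nat.dvd_lcm_right n _)
  have key : p * Nat.lcm (q * b₁) u = q * Nat.lcm n (p * c) := Nat.mul_lcm_mul_lcm_div_comm n p q u
  have hinner : Nat.lcm (q * b₁) u = Nat.lcm q u * d := by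
    refine Nat.eq_of_mul_eq_mul_left (Nat.mul_pos hp hc_pos) ?_
    calc p * c * Nat.lcm (q * b₁) u = c * (q * Nat.lcm n (p * c)) := by rw [← key]; ring
      _ = p * c * (Nat.lcm q u * d) := by rw [← hc, ← hd]; ring
  refine ⟨Nat.eq_of_mul_eq_mul_left (Nat.mul_pos hq hn) ?_, Nat.eq_of_mul_eq_mul_left hq ?_,
    Nat.eq_of_mul_eq_mul_left hu ?_⟩
  · calc q * n * (a₁ * a₂) = p * (q * b₁ * a₂) := by rw [← mul_assoc, mul_assoc q, ha₁, ← hb₁]; ring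
      _ = q * n * a := by rw [ha₂, key, ← ha]; ring
  · calc q * (b₁ * a₂) = Nat.lcm q u * d := by rw [← hinner, ← ha₂]; ring
      _ = q * (c * d) := by rw [← hc]; ring
  · rw [hb₂, hinner, ← mul_assoc, he]

theorem sstp_assoc_general (m n p q u v : ℕ)
    (hn : 0 < n) (hp : 0 < p) (hq : 0 < q) (hu : 0 < u)
    (A : Matrix (Fin m) (Fin n) ℝ) (B : Matrix (Fin p) (Fin q) ℝ)
    (C : Matrix (Fin u) (Fin v) ℝ) :
    HEq (sstp (sstp A B) C) (sstp A (sstp B C)) := by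
  obtain ⟨hA, hB, hC⟩ := sstp_assoc_factors hn hp hq hu
  refine heq_of_toKernel_eq (by rw [mul_assoc, hA]) (by rw [hC, mul_assoc]) ?_
  simp only [toKernel_sstp, inflate_kernelMul, inflate_inflate, mul_assoc]
  rw [hA, hB, hC, kernelMul_assoc]

/-- the second semi-tensor product is associative. -/
theorem sstp_assoc (m n p q u v : ℕ)
    (hm : 0 < m) (hn : 0 < n) (hp : 0 < p) (hq : 0 < q) (hu : 0 < u) (hv : 0 < v)
    (A : Matrix (Fin m) (Fin n) ℝ) (B : Matrix (Fin p) (Fin q) ℝ)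
    (C : Matrix (Fin u) (Fin v) ℝ) :
    HEq (sstp (sstp A B) C) (sstp A (sstp B C)) :=
  sstp_assoc_general m n p q u v hn hp hq hu A B C
end
end
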